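/- Lemma 5 (uniform stability of LLSVMs). In the setting of the previous statement (ŵ the minimizer of the full empirical regularized hinge objective with weights k_j ∈ [0,K_m], ŵ^{-i} the minimizer with the i-th summand removed), for every (x,y) ∈ ℝ^d × {−1,+1} with ‖(x,1)‖ ≤ M: |L(y⟨ŵ,x⟩) − L(y⟨ŵ^{-i},x⟩)|·K(x,x₀,σ) ≤ M·K_m·‖ŵ − ŵ^{-i}‖ ≤ 2M²K_m²/(nλ). Thus LLSVMs have uniform stability at most 2M²K_m²/(nλ) with respect to the loss (x,y) ↦ L(y⟨w,x⟩)K(x,x₀,σ). -/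

import Mathlib

open MeasureTheory Metric Filter Set
open scoped ENNReal Topology BigOperators

noncomputable section

/-- The hinge loss `L(t) = max (1 - t) 0`. -/
def hinge (t : ℝ) : ℝ := max (1 - t) 0

/-- The augmented vector `(x, 1) ∈ ℝ^(d+1)`. -/
def aug {d : ℕ} (x : EuclideanSpace ℝ (Fin d)) : EuclideanSpace ℝ (Fin (d + 1)) :=
  WithLp.toLp 2 (Fin.snoc x 1 : Fin (d + 1) → ℝ)

/-- The affine predictor `⟨w, x⟩ := ⟨w, (x,1)⟩`. -/
def pred {d : ℕ} (w : EuclideanSpace ℝ (Fin (d + 1))) (x : EuclideanSpace ℝ (Fin d)) : ℝ :=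
  inner ℝ w (aug x)

/-! The objective `λ/2 ‖w‖² + g w` with `g` convex is `λ`-strongly convex, so at any `v` it
exceeds its minimum by at least `λ/4 ‖v - w‖²`, where `w` is the minimizer. Adding this bound
for the full objective at `ŵ^{-i}` and for the leave-one-out objective at `ŵ`, all terms but the
`i`-th cancel: `λ/2 ‖ŵ - ŵ^{-i}‖² ≤ (ℓ_i(ŵ^{-i}) - ℓ_i(ŵ)) / n`. The weighted loss
`w ↦ L(y⟨w,x⟩) k` is `M K_m`-Lipschitz (the hinge is 1-Lipschitz, `|y| = 1`, `‖(x,1)‖ ≤ M`,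
`k ≤ K_m`), hence `‖ŵ - ŵ^{-i}‖ ≤ 2 M K_m / (n λ)`, and both inequalities follow. -/

theorem ConvexOn.finset_sum {𝕜 E β ι : Type*} [Semiring 𝕜] [PartialOrder 𝕜] [AddCommMonoid E]
    [AddCommMonoid β] [PartialOrder β] [IsOrderedAddMonoid β] [SMul 𝕜 E] [Module 𝕜 β]
    {s : Set E} (hs : Convex 𝕜 s) (t : Finset ι) {f : ι → E → β}
    (hf : ∀ i ∈ t, ConvexOn 𝕜 s (f i)) : ConvexOn 𝕜 s fun x => ∑ i ∈ t, f i x := by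
  simpa only [← Finset.sum_apply] using
    Finset.sum_induction f (ConvexOn 𝕜 s) (fun _ _ => ConvexOn.add) (convexOn_const 0 hs) hf

section RegularizedMinimizer

variable {E : Type*} [NormedAddCommGroup E] [InnerProductSpace ℝ E]

-- Compare with the value at the midpoint of `w` and `v`; the parallelogram law produces `‖v - w‖²`.
theorem ConvexOn.quadratic_growth_of_regularized_min {lam : ℝ} {g : E → ℝ}
    (hg : ConvexOn ℝ univ g) {w : E}
    (hw : ∀ v, lam / 2 * ‖w‖ ^ 2 + g w ≤ lam / 2 * ‖v‖ ^ 2 + g v) (v : E) :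
    lam / 4 * ‖v - w‖ ^ 2 ≤ (lam / 2 * ‖v‖ ^ 2 + g v) - (lam / 2 * ‖w‖ ^ 2 + g w) := by
  set m : E := (1 / 2 : ℝ) • w + (1 / 2 : ℝ) • v
  have hgm : g m ≤ (g w + g v) / 2 := by
    have := hg.2 (mem_univ w) (mem_univ v) (by norm_num : (0 : ℝ) ≤ 1 / 2)
      (by norm_num : (0 : ℝ) ≤ 1 / 2) (by norm_num)
    simp only [smul_eq_mul] at this
    linarith
  have hm : ‖m‖ ^ 2 = (‖w‖ ^ 2 + ‖v‖ ^ 2) / 2 - ‖v - w‖ ^ 2 / 4 := by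
    have hpar := parallelogram_law_with_norm ℝ w v
    rw [norm_sub_rev v w, show m = (1 / 2 : ℝ) • (w + v) by simp only [m, smul_add], norm_smul]
    norm_num
    nlinarith [hpar]
  have := hw m
  rw [hm] at this
  nlinarith [hgm]

theorem norm_sub_le_of_regularized_min_add {lam c : ℝ} (hlam : 0 < lam) (hc : 0 ≤ c)
    {g ℓ : E → ℝ} (hg : ConvexOn ℝ univ g) (hℓ : ConvexOn ℝ univ ℓ) {w w' : E}
    (hw : ∀ v, lam / 2 * ‖w‖ ^ 2 + (g w + ℓ w) ≤ lam / 2 * ‖v‖ ^ 2 + (g v + ℓ v))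
    (hw' : ∀ v, lam / 2 * ‖w'‖ ^ 2 + g w' ≤ lam / 2 * ‖v‖ ^ 2 + g v)
    (hℓw : ℓ w' - ℓ w ≤ c * ‖w - w'‖) :
    ‖w - w'‖ ≤ 2 * c / lam := by
  have h := (hg.add hℓ).quadratic_growth_of_regularized_min hw w'
  have h' := hg.quadratic_growth_of_regularized_min hw' w
  simp only [Pi.add_apply, norm_sub_rev w' w] at h
  have hsq : lam / 2 * ‖w - w'‖ ^ 2 ≤ c * ‖w - w'‖ := by linarith
  rw [le_div_iff₀ hlam]
  rcases (norm_nonneg (w - w')).eq_or_lt with hzero | hpos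
  · rw [← hzero]; linarith
  · nlinarith

end RegularizedMinimizer

theorem convexOn_hinge : ConvexOn ℝ univ hinge :=
  ((convexOn_const 1 convex_univ).sub (concaveOn_id convex_univ)).sup (convexOn_const 0 convex_univ)

theorem abs_hinge_sub_hinge_le (a b : ℝ) : |hinge a - hinge b| ≤ |a - b| := by
  simpa only [hinge, sub_sub_sub_cancel_left, abs_sub_comm b a] using
    abs_max_sub_max_le_abs (1 - a) (1 - b) 0

section Predictor

variable {d : ℕ}

theorem pred_sub (u v : EuclideanSpace ℝ (Fin (d + 1))) (x : EuclideanSpace ℝ (Fin d)) :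
    pred (u - v) x = pred u x - pred v x :=
  inner_sub_left u v (aug x)

theorem convexOn_hinge_mul_pred_mul (y : ℝ) {c : ℝ} (hc : 0 ≤ c) (x : EuclideanSpace ℝ (Fin d)) :
    ConvexOn ℝ univ fun w : EuclideanSpace ℝ (Fin (d + 1)) => hinge (y * pred w x) * c := by
  have h := (convexOn_hinge.comp_linearMap (y • (innerSL ℝ (aug x)).toLinearMap)).smul hc
  rw [preimage_univ] at h
  refine h.congr fun w _ => ?_
  simp [pred, real_inner_comm, mul_comm]

theorem abs_hinge_mul_pred_sub_le (y : ℝ) (u v : EuclideanSpace ℝ (Fin (d + 1)))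
    (x : EuclideanSpace ℝ (Fin d)) :
    |hinge (y * pred u x) - hinge (y * pred v x)| ≤ |y| * (‖aug x‖ * ‖u - v‖) :=
  calc |hinge (y * pred u x) - hinge (y * pred v x)|
      ≤ |y * pred u x - y * pred v x| := abs_hinge_sub_hinge_le _ _
    _ = |y| * |pred (u - v) x| := by rw [pred_sub, ← mul_sub, abs_mul]
    _ ≤ |y| * (‖aug x‖ * ‖u - v‖) := by
      rw [mul_comm ‖aug x‖]
      exact mul_le_mul_of_nonneg_left (abs_real_inner_le_norm _ _) (abs_nonneg y)

theorem abs_hinge_mul_pred_sub_mul_le {y M Km k : ℝ} (hy : y = 1 ∨ y = -1)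
    {x : EuclideanSpace ℝ (Fin d)} (hx : ‖aug x‖ ≤ M) (hk : k ∈ Icc 0 Km)
    (u v : EuclideanSpace ℝ (Fin (d + 1))) :
    |hinge (y * pred u x) - hinge (y * pred v x)| * k ≤ M * Km * ‖u - v‖ := by
  have hloss := abs_hinge_mul_pred_sub_le y u v x
  rw [(abs_eq zero_le_one).2 hy, one_mul] at hloss
  have hloss' : |hinge (y * pred u x) - hinge (y * pred v x)| ≤ M * ‖u - v‖ :=
    hloss.trans (by gcongr)
  calc |hinge (y * pred u x) - hinge (y * pred v x)| * k
      ≤ (M * ‖u - v‖) * Km :=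
        mul_le_mul hloss' hk.2 hk.1 ((abs_nonneg _).trans hloss')
    _ = M * Km * ‖u - v‖ := by ring

theorem hinge_mul_pred_sub_mul_le {y M Km k : ℝ} (hy : y = 1 ∨ y = -1)
    {x : EuclideanSpace ℝ (Fin d)} (hx : ‖aug x‖ ≤ M) (hk : k ∈ Icc 0 Km)
    (u v : EuclideanSpace ℝ (Fin (d + 1))) :
    hinge (y * pred u x) * k - hinge (y * pred v x) * k ≤ M * Km * ‖u - v‖ := by
  rw [← sub_mul]
  exact (mul_le_mul_of_nonneg_right (le_abs_self _) hk.1).trans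
    (abs_hinge_mul_pred_sub_mul_le hy hx hk u v)

end Predictor

theorem llsvm_uniform_stability_general {d n : ℕ} (lam M Km : ℝ) (hlam : 0 < lam)
    (xs : Fin n → EuclideanSpace ℝ (Fin d)) (ys k : Fin n → ℝ)
    (hys : ∀ j, ys j = 1 ∨ ys j = -1)
    (hM : ∀ j, ‖aug (xs j)‖ ≤ M)
    (hk : ∀ j, k j ∈ Set.Icc (0 : ℝ) Km)
    (i : Fin n) (what whati : EuclideanSpace ℝ (Fin (d + 1)))
    (hwhat : ∀ w, lam / 2 * ‖what‖ ^ 2 + (1 / n) * ∑ j, hinge (ys j * pred what (xs j)) * k j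
      ≤ lam / 2 * ‖w‖ ^ 2 + (1 / n) * ∑ j, hinge (ys j * pred w (xs j)) * k j)
    (hwhati : ∀ w, lam / 2 * ‖whati‖ ^ 2
        + (1 / n) * ∑ j ∈ Finset.univ.erase i, hinge (ys j * pred whati (xs j)) * k j
      ≤ lam / 2 * ‖w‖ ^ 2
        + (1 / n) * ∑ j ∈ Finset.univ.erase i, hinge (ys j * pred w (xs j)) * k j)
    (x : EuclideanSpace ℝ (Fin d)) (y kx : ℝ)
    (hy : y = 1 ∨ y = -1) (hx : ‖aug x‖ ≤ M) (hkx : kx ∈ Set.Icc (0 : ℝ) Km) :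
    |hinge (y * pred what x) - hinge (y * pred whati x)| * kx
        ≤ M * Km * ‖what - whati‖ ∧
      M * Km * ‖what - whati‖ ≤ 2 * M ^ 2 * Km ^ 2 / (n * lam) := by
  have hM0 : 0 ≤ M := (norm_nonneg _).trans hx
  have hKm0 : 0 ≤ Km := hkx.1.trans hkx.2
  have hn : (0 : ℝ) < n := Nat.cast_pos.2 i.pos
  set ℓ : Fin n → EuclideanSpace ℝ (Fin (d + 1)) → ℝ :=
    fun j w => hinge (ys j * pred w (xs j)) * k j
  have hconv (j : Fin n) : ConvexOn ℝ univ (ℓ j) :=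
    convexOn_hinge_mul_pred_mul (ys j) (hk j).1 (xs j)
  have hsplit (w) : (1 / n : ℝ) * ∑ j, ℓ j w
      = (1 / n) * ∑ j ∈ Finset.univ.erase i, ℓ j w + (1 / n) * ℓ i w := by
    rw [← Finset.sum_erase_add _ _ (Finset.mem_univ i), mul_add]
  have hgap :
      (1 / n : ℝ) * ℓ i whati - (1 / n) * ℓ i what ≤ 1 / n * (M * Km) * ‖what - whati‖ := by
    have := mul_le_mul_of_nonneg_left
      (hinge_mul_pred_sub_mul_le (hys i) (hM i) (hk i) whati what) (one_div_nonneg.2 hn.le)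
    rw [norm_sub_rev] at this
    linarith
  have hdist : ‖what - whati‖ ≤ 2 * (1 / n * (M * Km)) / lam :=
    norm_sub_le_of_regularized_min_add hlam (by positivity)
      ((ConvexOn.finset_sum convex_univ _ fun j _ => hconv j).smul (by positivity))
      ((hconv i).smul (by positivity))
      (fun v => by simpa only [smul_eq_mul, ← hsplit, ℓ] using hwhat v) hwhati hgap
  refine ⟨abs_hinge_mul_pred_sub_mul_le hy hx hkx what whati, ?_⟩
  calc M * Km * ‖what - whati‖ ≤ M * Km * (2 * (1 / n * (M * Km)) / lam) := by gcongr
    _ = 2 * M ^ 2 * Km ^ 2 / (n * lam) := by field_simp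

/-- Lemma 5 (uniform stability of LLSVMs): for the weighted regularized hinge objective,
the loss `(x,y) ↦ L(y⟨w,x⟩) K(x,x₀,σ)` changes by at most `2 M² K_m² / (n λ)` when one
training example is removed. -/
theorem llsvm_uniform_stability {d n : ℕ} (hn : 1 ≤ n) (lam M Km : ℝ) (hlam : 0 < lam)
    (xs : Fin n → EuclideanSpace ℝ (Fin d)) (ys k : Fin n → ℝ)
    (hys : ∀ j, ys j = 1 ∨ ys j = -1)
    (hM : ∀ j, ‖aug (xs j)‖ ≤ M)
    (hk : ∀ j, k j ∈ Set.Icc (0 : ℝ) Km)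
    (i : Fin n) (what whati : EuclideanSpace ℝ (Fin (d + 1)))
    (hwhat : ∀ w, lam / 2 * ‖what‖ ^ 2 + (1 / n) * ∑ j, hinge (ys j * pred what (xs j)) * k j
      ≤ lam / 2 * ‖w‖ ^ 2 + (1 / n) * ∑ j, hinge (ys j * pred w (xs j)) * k j)
    (hwhati : ∀ w, lam / 2 * ‖whati‖ ^ 2
        + (1 / n) * ∑ j ∈ Finset.univ.erase i, hinge (ys j * pred whati (xs j)) * k j
      ≤ lam / 2 * ‖w‖ ^ 2
        + (1 / n) * ∑ j ∈ Finset.univ.erase i, hinge (ys j * pred w (xs j)) * k j)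
    (x : EuclideanSpace ℝ (Fin d)) (y kx : ℝ)
    (hy : y = 1 ∨ y = -1) (hx : ‖aug x‖ ≤ M) (hkx : kx ∈ Set.Icc (0 : ℝ) Km) :
    |hinge (y * pred what x) - hinge (y * pred whati x)| * kx
        ≤ M * Km * ‖what - whati‖ ∧
      M * Km * ‖what - whati‖ ≤ 2 * M ^ 2 * Km ^ 2 / (n * lam) :=
  llsvm_uniform_stability_general lam M Km hlam xs ys k hys hM hk i what whati hwhat hwhati x y kx
    hy hx hkx
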